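/- arXiv:1302.3841 — 3 statements merged into one kernel-verified Lean document; each statement's English description precedes it below -/
import Mathlib

section
/- Let φ : ℝ → ℝ be a smooth function such that the vector space spanned by all translates φ_s(t) := φ(t−s), s ∈ ℝ, is finite dimensional. Then φ satisfies a linear ordinary differential equation with constant coefficients (equivalently, φ is an exponential polynomial). -/
open Filter Topology

/-- A smooth function whose translates span a finite dimensional space satisfies a
linear ODE with constant coefficients (i.e. it is an exponential polynomial). -/
theorem stmt0 (φ : ℝ → ℝ) (hφ : ContDiff ℝ (⊤ : ℕ∞) φ)
    (hV : FiniteDimensional ℝ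
      (Submodule.span ℝ {g : ℝ → ℝ | ∃ s : ℝ, g = fun t => φ (t - s)})) :
    ∃ (n : ℕ) (c : Fin n → ℝ), ∀ t : ℝ,
      iteratedDeriv n φ t = ∑ i : Fin n, c i * iteratedDeriv (i : ℕ) φ t := by
  classical
  set V : Submodule ℝ (ℝ → ℝ) :=
    Submodule.span ℝ {g : ℝ → ℝ | ∃ s : ℝ, g = fun t => φ (t - s)} with hVdef
  -- V is closed (finite-dimensional subspace of a T2 TVS, pointwise topology)
  have hclosed : IsClosed (V : Set (ℝ → ℝ)) := Submodule.closed_of_finiteDimensional V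
  -- V is translation invariant
  have htrans : ∀ (s : ℝ) (f : ℝ → ℝ), f ∈ V → (fun t => f (t - s)) ∈ V := by
    intro s f hf
    have : Submodule.map (LinearMap.funLeft ℝ ℝ (fun t => t - s)) V ≤ V := by
      rw [hVdef, Submodule.map_span, Submodule.span_le]
      rintro - ⟨-, ⟨u, rfl⟩, rfl⟩
      apply Submodule.subset_span
      exact ⟨u + s, by funext t; simp [LinearMap.funLeft, sub_sub, add_comm]⟩
    exact this ⟨f, hf, rfl⟩
  -- φ itself is in V
  have hφV : φ ∈ V := by
    apply Submodule.subset_span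
    exact ⟨0, by funext t; simp⟩
  -- derivative of a differentiable member of V is in V
  have hder : ∀ f : ℝ → ℝ, f ∈ V → Differentiable ℝ f → deriv f ∈ V := by
    intro f hf hdiff
    have hq : ∀ n : ℕ, ((n : ℝ) + 1) • ((fun t => f (t - (-(1 / ((n : ℝ) + 1))))) - f) ∈ V := by
      intro n
      exact Submodule.smul_mem V _ (Submodule.sub_mem V (htrans _ f hf) hf)
    have htend : Tendsto
        (fun n : ℕ => ((n : ℝ) + 1) • ((fun t => f (t - (-(1 / ((n : ℝ) + 1))))) - f))
        atTop (𝓝 (deriv f)) := by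
      rw [tendsto_pi_nhds]
      intro t
      have hslope : Tendsto (slope f t) (𝓝[≠] t) (𝓝 (deriv f t)) :=
        hasDerivAt_iff_tendsto_slope.1 (hdiff t).hasDerivAt
      have hu : Tendsto (fun n : ℕ => t + 1 / ((n : ℝ) + 1)) atTop (𝓝[≠] t) := by
        apply tendsto_nhdsWithin_of_tendsto_nhds_of_eventually_within
        · simpa using tendsto_const_nhds.add (tendsto_one_div_add_atTop_nhds_zero_nat (𝕜 := ℝ))
        · refine Eventually.of_forall fun n => ?_
          have : (0:ℝ) < 1 / ((n : ℝ) + 1) := by positivity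
          simp only [Set.mem_compl_iff, Set.mem_singleton_iff]
          intro h
          nlinarith [h]
      have := hslope.comp hu
      refine this.congr fun n => ?_
      have hne : ((n : ℝ) + 1) ≠ 0 := by positivity
      simp only [Function.comp, slope, vsub_eq_sub, Pi.smul_apply, Pi.sub_apply, smul_eq_mul,
        sub_neg_eq_add, add_sub_cancel_left]
      field_simp
    exact hclosed.mem_of_tendsto htend (Eventually.of_forall hq)
  -- all iterated derivatives of φ are in V
  have hiter : ∀ k : ℕ, iteratedDeriv k φ ∈ V := by
    intro k
    induction k with
    | zero => simpa using hφV
    | succ k ih =>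
      rw [iteratedDeriv_succ]
      exact hder _ ih (hφ.differentiable_iteratedDeriv k (by exact_mod_cast lt_top_iff_ne_top.2 (by simp)))
  -- d+1 iterated derivatives are linearly dependent in V
  set d := Module.finrank ℝ V with hd
  have hnli : ¬ LinearIndependent ℝ
      (fun k : Fin (d + 1) => (⟨iteratedDeriv (k : ℕ) φ, hiter k⟩ : V)) := by
    intro hli
    have := hli.fintype_card_le_finrank
    rw [Fintype.card_fin, ← hd] at this
    omega
  rw [Fintype.not_linearIndependent_iff] at hnli
  obtain ⟨g, hsum, i0, hi0⟩ := hnli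
  -- extend coefficients to ℕ
  set G : ℕ → ℝ := fun k => if h : k < d + 1 then g ⟨k, h⟩ else 0 with hG
  have hrel : ∀ t : ℝ, ∑ k ∈ Finset.range (d + 1), G k * iteratedDeriv k φ t = 0 := by
    intro t
    have h0 := congrArg (fun v : V => (v : ℝ → ℝ) t) hsum
    simp only [Submodule.coe_sum, Finset.sum_apply, SetLike.val_smul, Pi.smul_apply,
      smul_eq_mul, ZeroMemClass.coe_zero, Pi.zero_apply] at h0
    rw [Finset.sum_range fun k => G k * iteratedDeriv k φ t, ← h0]
    refine Finset.sum_congr rfl fun k _ => ?_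
    simp [hG, k.isLt, not_lt.2 (Nat.lt_succ_iff.1 k.isLt)]
  -- find the greatest nonzero coefficient
  have hGi0 : G (i0 : ℕ) ≠ 0 := by simpa [hG, i0.isLt, Nat.lt_succ_iff.1 i0.isLt] using hi0
  set n := Nat.findGreatest (fun k => G k ≠ 0) d with hn
  have hGn : G n ≠ 0 := by
    rw [hn]
    exact Nat.findGreatest_spec (P := fun k => G k ≠ 0) (Nat.lt_succ_iff.1 i0.isLt) hGi0
  have hnle : n ≤ d := Nat.findGreatest_le d
  have hzero : ∀ k, n < k → k ≤ d → G k = 0 := by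
    intro k hk hkd
    by_contra h
    exact absurd (Nat.le_findGreatest hkd h) (not_le.2 hk)
  refine ⟨n, fun i => -(G (i : ℕ) / G n), fun t => ?_⟩
  have hsplit : ∑ k ∈ Finset.range (d + 1), G k * iteratedDeriv k φ t
      = (∑ k ∈ Finset.range n, G k * iteratedDeriv k φ t) + G n * iteratedDeriv n φ t := by
    rw [← Finset.sum_range_succ]
    refine (Finset.sum_subset (Finset.range_subset_range.2 (by omega)) ?_).symm
    intro k hk hk'
    rw [Finset.mem_range] at hk hk'
    rw [hzero k (by omega) (by omega), zero_mul]
  have h1 := hrel t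
  rw [hsplit] at h1
  have h2 : iteratedDeriv n φ t
      = -(∑ k ∈ Finset.range n, G k * iteratedDeriv k φ t) / G n := by
    field_simp
    linarith
  have hterm : ∀ k ∈ Finset.range n, -(G k / G n) * iteratedDeriv k φ t
      = -(G k * iteratedDeriv k φ t) / G n := by intros; ring
  rw [h2, Fin.sum_univ_eq_sum_range (fun i => -(G i / G n) * iteratedDeriv i φ t),
    Finset.sum_congr rfl hterm, ← Finset.sum_div, ← Finset.sum_neg_distrib]
end

section
/- Let φ : ℝ → ℝ be smooth and suppose V = span{φ_s : s ∈ ℝ} is finite dimensional. Then the derivative φ' belongs to V. -/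
/-- If the span of the translates of a smooth function is finite dimensional, then the
derivative of the function belongs to this span. -/
theorem stmt1 (φ : ℝ → ℝ) (hφ : ContDiff ℝ (⊤ : ℕ∞) φ)
    (hV : FiniteDimensional ℝ
      (Submodule.span ℝ {g : ℝ → ℝ | ∃ s : ℝ, g = fun t => φ (t - s)})) :
    deriv φ ∈ Submodule.span ℝ {g : ℝ → ℝ | ∃ s : ℝ, g = fun t => φ (t - s)} := by
  set V := Submodule.span ℝ {g : ℝ → ℝ | ∃ s : ℝ, g = fun t => φ (t - s)} with hVdef
  have hφmem : ∀ s : ℝ, (fun t => φ (t - s)) ∈ V := fun s =>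
    Submodule.subset_span ⟨s, rfl⟩
  have hφ0 : φ ∈ V := by simpa using hφmem 0
  have hclosed : IsClosed (V : Set (ℝ → ℝ)) := Submodule.closed_of_finiteDimensional V
  have hmem : ∀ s : ℝ, (fun t => (φ t - φ (t - s)) * s⁻¹) ∈ V := by
    intro s
    have h : (fun t => (φ t - φ (t - s)) * s⁻¹)
        = s⁻¹ • (φ - fun t => φ (t - s)) := by
      funext t; simp [mul_comm]
    rw [h]
    exact Submodule.smul_mem _ _ (Submodule.sub_mem _ hφ0 (hφmem s))
  have htend : Filter.Tendsto (fun s : ℝ => fun t => (φ t - φ (t - s)) * s⁻¹)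
      (nhdsWithin (0:ℝ) {(0:ℝ)}ᶜ) (nhds (deriv φ)) := by
    rw [tendsto_pi_nhds]
    intro t
    have hd : HasDerivAt φ (deriv φ t) t :=
      (hφ.differentiable (by simp) t).hasDerivAt
    have hslope := hasDerivAt_iff_tendsto_slope.mp hd
    have hmap : Filter.Tendsto (fun s : ℝ => t - s)
        (nhdsWithin (0:ℝ) {(0:ℝ)}ᶜ) (nhdsWithin t {t}ᶜ) := by
      apply tendsto_nhdsWithin_of_tendsto_nhds_of_eventually_within
      · exact ((continuous_const.sub continuous_id).tendsto' 0 t (by simp)).mono_left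
          nhdsWithin_le_nhds
      · filter_upwards [self_mem_nhdsWithin] with s hs
        simp only [Set.mem_compl_iff, Set.mem_singleton_iff] at hs ⊢
        intro h
        apply hs
        linarith
    refine ((hslope.comp hmap).congr ?_)
    intro s
    simp only [Function.comp_apply, slope_def_field, div_eq_mul_inv]
    have : t - s - t = -s := by ring
    rw [this, inv_neg]
    ring
  exact hclosed.mem_of_tendsto htend
    (Filter.Eventually.of_forall fun s => hmem s)
end

section
/- Let f : [0,∞) → (0,∞) be continuous with f(t)/(t^m e^{ht}) → 1 as t → ∞ for some m > 0, h > 0, and set ψ_a(s) = ∫_{s+a}^∞ dt/f(t) for a ∈ ℝ (integrals converge). Then for every a ∈ ℝ, lim_{s→∞} ψ_a(s)/ψ_0(s) = e^{−ha}, and the convergence is uniform for a in compact intervals. -/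
/-!
Write `g = 1 / f`. Since `f(t) ~ t^m e^{ht}`, the ratio `g(u + a) / g(u) = f(u) / f(u + a)`
behaves like `(u / (u + a))^m e^{-ha}` and so tends to `e^{-ha}` as `u → ∞`, locally uniformly
in `a`. Once `|g(u + a) - e^{-ha} g(u)| ≤ ε g(u)` for all `u > s`, integrating over `u > s` and
substituting `t = u + a` shows that `ψ_a(s) / ψ_0(s)` is within `ε` of `e^{-ha}`.
-/
open MeasureTheory Filter Set Topology

section TailIntegrals

variable {E : Type*} [NormedAddCommGroup E]

lemma setIntegral_Ioi_comp_add_right [NormedSpace ℝ E] (g : ℝ → E) (s a : ℝ) :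
    ∫ u in Ioi s, g (u + a) = ∫ t in Ioi (s + a), g t := by
  rw [← (measurePreserving_add_right volume a).setIntegral_preimage_emb
    (MeasurableEquiv.addRight a).measurableEmbedding g, preimage_add_const_Ioi,
    add_sub_cancel_right]

lemma IntegrableOn.comp_add_right_Ioi {g : ℝ → E} {s a : ℝ}
    (hg : IntegrableOn g (Ioi (s + a))) : IntegrableOn (fun u => g (u + a)) (Ioi s) := by
  rw [← add_sub_cancel_right s a, ← preimage_add_const_Ioi]
  exact ((measurePreserving_add_right volume a).integrableOn_comp_preimage
    (MeasurableEquiv.addRight a).measurableEmbedding).2 hg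

end TailIntegrals

lemma setIntegral_Ioi_pos {g : ℝ → ℝ} {s : ℝ} (hg : IntegrableOn g (Ioi s))
    (hpos : ∀ t ∈ Ioi s, 0 < g t) : 0 < ∫ t in Ioi s, g t := by
  rw [setIntegral_pos_iff_support_of_nonneg_ae
    (ae_restrict_of_forall_mem measurableSet_Ioi fun t ht => (hpos t ht).le) hg,
    inter_eq_right.2 fun t ht => Function.mem_support.2 (hpos t ht).ne']
  simp

lemma abs_integral_div_integral_sub_le {α : Type*} [MeasurableSpace α] {μ : Measure α}
    {φ ψ : α → ℝ} {c ε : ℝ} (hφ : Integrable φ μ) (hψ : Integrable ψ μ)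
    (hψ_pos : 0 < ∫ x, ψ x ∂μ) (hle : ∀ᵐ x ∂μ, |φ x - c * ψ x| ≤ ε * ψ x) :
    |(∫ x, φ x ∂μ) / (∫ x, ψ x ∂μ) - c| ≤ ε := by
  have hdiff : |∫ x, φ x ∂μ - c * ∫ x, ψ x ∂μ| ≤ ε * ∫ x, ψ x ∂μ := by
    rw [← integral_const_mul, ← integral_sub hφ (hψ.const_mul c), ← integral_const_mul]
    exact norm_integral_le_of_norm_le (f := fun x => φ x - c * ψ x) (hψ.const_mul ε) hle
  rwa [div_sub' hψ_pos.ne', abs_div, abs_of_pos hψ_pos, div_le_iff₀ hψ_pos, mul_comm]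

theorem tendstoUniformlyOn_integral_Ioi_add_div {g c : ℝ → ℝ} {K : Set ℝ} {t₀ : ℝ}
    (hint : IntegrableOn g (Ioi t₀)) (hpos : ∀ᶠ t in atTop, 0 < g t) (hK : BddBelow K)
    (hratio : TendstoUniformlyOn (fun u a => g (u + a) / g u) c atTop K) :
    TendstoUniformlyOn (fun s a => (∫ t in Ioi (s + a), g t) / ∫ t in Ioi s, g t)
      c atTop K := by
  obtain ⟨b, hb⟩ := hK
  rw [Metric.tendstoUniformlyOn_iff] at hratio ⊢
  intro ε hε
  obtain ⟨U, hU⟩ := eventually_atTop.1 ((hratio (ε / 2) (half_pos hε)).and hpos)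
  filter_upwards [eventually_ge_atTop U, eventually_ge_atTop t₀,
    eventually_ge_atTop (t₀ - b)] with s hsU hst₀ hsb a ha
  have hg_pos : ∀ u ∈ Ioi s, 0 < g u := fun u hu => (hU u (hsU.trans hu.out.le)).2
  have hgs : IntegrableOn g (Ioi s) := hint.mono_set (Ioi_subset_Ioi hst₀)
  have hgsa : IntegrableOn (fun u => g (u + a)) (Ioi s) :=
    IntegrableOn.comp_add_right_Ioi (hint.mono_set (Ioi_subset_Ioi (by linarith [hb ha])))
  have hle : ∀ u ∈ Ioi s, |g (u + a) - c a * g u| ≤ ε / 2 * g u := by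
    intro u hu
    have hdist := (hU u (hsU.trans hu.out.le)).1 a ha
    have hgu := hg_pos u hu
    rw [dist_comm, Real.dist_eq] at hdist
    rw [show g (u + a) - c a * g u = (g (u + a) / g u - c a) * g u by field_simp, abs_mul,
      abs_of_pos hgu]
    exact mul_le_mul_of_nonneg_right hdist.le hgu.le
  rw [dist_comm, Real.dist_eq, ← setIntegral_Ioi_comp_add_right]
  exact (abs_integral_div_integral_sub_le hgsa hgs (setIntegral_Ioi_pos hgs hg_pos)
    (ae_restrict_of_forall_mem measurableSet_Ioi hle)).trans_lt (half_lt_self hε)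

lemma rpow_mul_exp_div_rpow_mul_exp_add {u a : ℝ} (hu : 0 < u) (hua : 0 < u + a) (m h : ℝ) :
    u ^ m * Real.exp (h * u) / ((u + a) ^ m * Real.exp (h * (u + a))) =
      (u / (u + a)) ^ m * Real.exp (-h * a) := by
  rw [Real.div_rpow hu.le hua.le, mul_div_mul_comm, ← Real.exp_sub]
  ring_nf

theorem tendsto_div_comp_add_of_tendsto_div_rpow_mul_exp {f : ℝ → ℝ} {m h : ℝ}
    (hlim : Tendsto (fun t => f t / (t ^ m * Real.exp (h * t))) atTop (𝓝 1)) (a₀ : ℝ) :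
    Tendsto (fun p : ℝ × ℝ => f p.1 / f (p.1 + p.2)) (atTop ×ˢ 𝓝 a₀)
      (𝓝 (Real.exp (-h * a₀))) := by
  have hu : Tendsto (fun p : ℝ × ℝ => p.1) (atTop ×ˢ 𝓝 a₀) atTop := tendsto_fst
  have hua : Tendsto (fun p : ℝ × ℝ => p.1 + p.2) (atTop ×ˢ 𝓝 a₀) atTop :=
    tendsto_fst.atTop_add tendsto_snd
  have hquot : Tendsto (fun p : ℝ × ℝ => p.1 / (p.1 + p.2)) (atTop ×ˢ 𝓝 a₀)
      (𝓝 1) := by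
    have hsmall := (tendsto_snd (f := atTop) (g := 𝓝 a₀)).div_atTop hua
    have hone : Tendsto (fun p : ℝ × ℝ => 1 - p.2 / (p.1 + p.2)) (atTop ×ˢ 𝓝 a₀)
        (𝓝 1) := by
      simpa using tendsto_const_nhds.sub hsmall
    refine hone.congr' ?_
    filter_upwards [hua.eventually_gt_atTop 0] with p hp
    field_simp
    ring
  have hpow : Tendsto (fun p : ℝ × ℝ => (p.1 / (p.1 + p.2)) ^ m) (atTop ×ˢ 𝓝 a₀)
      (𝓝 1) := by
    simpa using hquot.rpow_const (Or.inl one_ne_zero)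
  have hexp : Tendsto (fun p : ℝ × ℝ => Real.exp (-h * p.2)) (atTop ×ˢ 𝓝 a₀)
      (𝓝 (Real.exp (-h * a₀))) :=
    ((continuous_const.mul continuous_id).rexp.tendsto a₀).comp tendsto_snd
  have hlim' := ((hlim.comp hu).div (hlim.comp hua) one_ne_zero).mul (hpow.mul hexp)
  rw [div_one, one_mul, one_mul] at hlim'
  refine hlim'.congr' ?_
  filter_upwards [hu.eventually_gt_atTop 0, hua.eventually_gt_atTop 0] with p hp hpa
  simp only [Pi.div_apply, Function.comp_apply]
  rw [← rpow_mul_exp_div_rpow_mul_exp_add hp hpa]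
  field_simp

theorem tendstoLocallyUniformly_div_comp_add {f : ℝ → ℝ} {m h : ℝ}
    (hlim : Tendsto (fun t => f t / (t ^ m * Real.exp (h * t))) atTop (𝓝 1)) :
    TendstoLocallyUniformly (fun u a => f u / f (u + a)) (fun a => Real.exp (-h * a)) atTop := by
  refine tendstoLocallyUniformly_iff_forall_tendsto.2 fun a₀ => ?_
  have hexp : Tendsto (fun p : ℝ × ℝ => Real.exp (-h * p.2)) (atTop ×ˢ 𝓝 a₀)
      (𝓝 (Real.exp (-h * a₀))) :=
    ((continuous_const.mul continuous_id).rexp.tendsto a₀).comp tendsto_snd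
  exact (hexp.prodMk_nhds (tendsto_div_comp_add_of_tendsto_div_rpow_mul_exp hlim a₀)).mono_right
    (nhds_le_uniformity _)

theorem stmt14_general (f : ℝ → ℝ) (m h : ℝ)
    (hpos : ∀ t ≥ (0:ℝ), 0 < f t)
    (hint : IntegrableOn (fun t => 1 / f t) (Set.Ioi 0))
    (hlim : Tendsto (fun t => f t / (t ^ m * Real.exp (h * t))) atTop (nhds 1)) :
    (∀ a : ℝ, Tendsto
      (fun s => (∫ t in Set.Ioi (s + a), 1 / f t) / ∫ t in Set.Ioi s, 1 / f t)
      atTop (nhds (Real.exp (-h * a)))) ∧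
    ∀ A B : ℝ, TendstoUniformlyOn
      (fun s a => (∫ t in Set.Ioi (s + a), 1 / f t) / ∫ t in Set.Ioi s, 1 / f t)
      (fun a => Real.exp (-h * a)) atTop (Set.Icc A B) := by
  have hratio (A B : ℝ) : TendstoUniformlyOn (fun u a => 1 / f (u + a) / (1 / f u))
      (fun a => Real.exp (-h * a)) atTop (Icc A B) := by
    simpa only [one_div, inv_div_inv] using tendstoLocallyUniformly_iff_forall_isCompact.1
      (tendstoLocallyUniformly_div_comp_add hlim) _ isCompact_Icc
  have hunif (A B : ℝ) := tendstoUniformlyOn_integral_Ioi_add_div hint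
    ((eventually_ge_atTop 0).mono fun t ht => one_div_pos.2 (hpos t ht)) bddBelow_Icc (hratio A B)
  exact ⟨fun a => (hunif a a).tendsto_at ⟨le_rfl, le_rfl⟩, hunif⟩

/-- For ψ_a(s) = ∫_{s+a}^∞ dt/f(t) with f(t)/(t^m e^{ht}) → 1, one has
ψ_a(s)/ψ_0(s) → e^{-ha}, uniformly for a in compact intervals. -/
theorem stmt14 (f : ℝ → ℝ) (m h : ℝ) (hm : 0 < m) (hh : 0 < h)
    (hf : ContinuousOn f (Set.Ici 0)) (hpos : ∀ t ≥ (0:ℝ), 0 < f t)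
    (hint : IntegrableOn (fun t => 1 / f t) (Set.Ioi 0))
    (hlim : Tendsto (fun t => f t / (t ^ m * Real.exp (h * t))) atTop (nhds 1)) :
    (∀ a : ℝ, Tendsto
      (fun s => (∫ t in Set.Ioi (s + a), 1 / f t) / ∫ t in Set.Ioi s, 1 / f t)
      atTop (nhds (Real.exp (-h * a)))) ∧
    ∀ A B : ℝ, TendstoUniformlyOn
      (fun s a => (∫ t in Set.Ioi (s + a), 1 / f t) / ∫ t in Set.Ioi s, 1 / f t)
      (fun a => Real.exp (-h * a)) atTop (Set.Icc A B) :=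
  stmt14_general f m h hpos hint hlim
end
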